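/- Decomposition of the Onsager–Machlup functional (Corollary 1): define Φ(ρ, j, f) = Ψ(ρ, j) − j·f + Ψ*(ρ, f) with the pairing j·f = (1/2)∑_{xy} j_{xy} f_{xy}, and D(ρ, j) = (1/2)∑_{xy} j_{xy} log(ρ(y)π(x)/(ρ(x)π(y))). Then Φ(ρ, j, F(ρ)) = D(ρ, j) + Φ_S(ρ, 0, F^S(ρ)) + Φ(ρ, j, F^A), where Φ_S is defined like Φ with Ψ, Ψ* replaced by Ψ_S, Ψ*_S (mobility a^S_{xy}(ρ) = a_{xy}(ρ)cosh(F^A_{xy}/2)), and Φ_S(ρ,0,F^S(ρ)) = Ψ*_S(ρ, F^S(ρ)). -/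

import Mathlib

open Finset

/-- Dual pairing `j·f = (1/2) ∑_{xy} j_{xy} f_{xy}` on directed edges. -/
noncomputable def pairF {V : Type*} [Fintype V] (j f : V → V → ℝ) : ℝ :=
  (1 / 2) * ∑ x, ∑ y, j x y * f x y

/-- `Ψ*(ρ, f) = ∑_{xy} a_{xy}(ρ) (cosh (f_{xy}/2) - 1)` for given mobility `a`. -/
noncomputable def PsiStar {V : Type*} [Fintype V] (a f : V → V → ℝ) : ℝ :=
  ∑ x, ∑ y, a x y * (Real.cosh (f x y / 2) - 1)

/-- `Ψ(ρ, j) = sup_g (j·g - Ψ*(ρ, g))`, the Legendre dual of `Ψ*`. -/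
noncomputable def PsiL {V : Type*} [Fintype V] (a j : V → V → ℝ) : ℝ :=
  ⨆ g : V → V → ℝ, (pairF j g - PsiStar a g)

/-- The Onsager–Machlup functional `Φ(ρ, j, f) = Ψ(ρ,j) - j·f + Ψ*(ρ,f)`. -/
noncomputable def PhiOM {V : Type*} [Fintype V] (a j f : V → V → ℝ) : ℝ :=
  PsiL a j - pairF j f + PsiStar a f


/- The heart of the argument is that the cross term of the splitting
`cosh ((F^S + F^A)/2) = cosh (F^S/2) cosh (F^A/2) + sinh (F^S/2) sinh (F^A/2)` sums to zero:
edgewise it equals `(ρ(x)/π(x) - ρ(y)/π(y)) (π(x) r(x,y) - π(y) r(y,x)) / 2`, and the stationary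
flux `π(x) r(x,y)` has equal row and column sums. The remaining terms regroup into `Φ(ρ, j, F^A)`,
`Ψ*_S(ρ, F^S) = Φ_S(ρ, 0, F^S)` (as `Ψ_S(ρ, 0) = 0`) and `-j·F^S(ρ) = D(ρ, j)`. -/

namespace Real

lemma sinh_half_log_div {u w : ℝ} (hu : 0 < u) (hw : 0 < w) :
    sinh (log (u / w) / 2) = (u - w) / (2 * √(u * w)) := by
  have hsu := sqrt_pos.2 hu
  have hsw := sqrt_pos.2 hw
  rw [← log_sqrt (div_pos hu hw).le, sinh_log (sqrt_pos.2 (div_pos hu hw)),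
    sqrt_div' _ hw.le, sqrt_mul hu.le]
  field_simp
  rw [sq_sqrt hu.le, sq_sqrt hw.le]

lemma sinh_half_log_div_mul_sinh_half_log_div {u w p q : ℝ} (hu : 0 < u) (hw : 0 < w)
    (hp : 0 < p) (hq : 0 < q) :
    sinh (log (u / w) / 2) * sinh (log (p / q) / 2) =
      (u - w) * (p - q) / (4 * √(u * w * (p * q))) := by
  rw [sinh_half_log_div hu hw, sinh_half_log_div hp hq, sqrt_mul (by positivity) (p * q)]
  field_simp
  ring

end Real

open Real in
lemma two_sqrt_mul_sinh_mul_sinh {ρ₁ ρ₂ π₁ π₂ r₁₂ r₂₁ : ℝ} (hρ₁ : 0 < ρ₁) (hρ₂ : 0 < ρ₂)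
    (hπ₁ : 0 < π₁) (hπ₂ : 0 < π₂) (hr₁₂ : 0 ≤ r₁₂) (hr₂₁ : 0 ≤ r₂₁)
    (hsym : 0 < r₁₂ ↔ 0 < r₂₁) :
    2 * √(ρ₁ * r₁₂ * (ρ₂ * r₂₁)) * sinh (log (ρ₁ * π₂ / (ρ₂ * π₁)) / 2) *
        sinh (log (π₁ * r₁₂ / (π₂ * r₂₁)) / 2) =
      (ρ₁ / π₁ - ρ₂ / π₂) * (π₁ * r₁₂ - π₂ * r₂₁) / 2 := by
  rcases hr₁₂.eq_or_lt with h₁₂ | h₁₂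
  · have h₂₁ : r₂₁ = 0 := by
      by_contra h
      exact (hsym.2 (hr₂₁.lt_of_ne' h)).ne h₁₂
    simp [← h₁₂, h₂₁]
  · have h₂₁ := hsym.1 h₁₂
    have hsqrt : √(ρ₁ * π₂ * (ρ₂ * π₁) * (π₁ * r₁₂ * (π₂ * r₂₁))) =
        π₁ * π₂ * √(ρ₁ * r₁₂ * (ρ₂ * r₂₁)) := by
      rw [show ρ₁ * π₂ * (ρ₂ * π₁) * (π₁ * r₁₂ * (π₂ * r₂₁)) =
          (π₁ * π₂) ^ 2 * (ρ₁ * r₁₂ * (ρ₂ * r₂₁)) by ring,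
        sqrt_mul (by positivity), sqrt_sq (by positivity)]
    have hpos : 0 < √(ρ₁ * r₁₂ * (ρ₂ * r₂₁)) := sqrt_pos.2 (by positivity)
    rw [mul_assoc, sinh_half_log_div_mul_sinh_half_log_div (by positivity) (by positivity)
      (by positivity) (by positivity), hsqrt]
    field_simp
    ring

section

variable {V : Type*} [Fintype V]

lemma sum_sum_sub_mul_sub_eq_zero (u : V → ℝ) (K : V → V → ℝ)
    (hK : ∀ x, ∑ y, K x y = ∑ y, K y x) :
    ∑ x, ∑ y, (u x - u y) * (K x y - K y x) = 0 := by
  have hrow : ∑ x, ∑ y, u x * K x y = ∑ x, ∑ y, u x * K y x := by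
    simp only [← mul_sum, hK]
  have hswap : ∀ L : V → V → ℝ, ∑ x, ∑ y, u y * L x y = ∑ x, ∑ y, u x * L y x :=
    fun _ => sum_comm
  simp only [sub_mul, mul_sub, sum_sub_distrib, hswap, hrow]
  ring

lemma sum_sum_two_sqrt_mul_sinh_mul_sinh_eq_zero (r : V → V → ℝ) (π ρ : V → ℝ)
    (hr : ∀ x y, 0 ≤ r x y) (hsym : ∀ x y, 0 < r x y ↔ 0 < r y x)
    (hπpos : ∀ x, 0 < π x) (hρpos : ∀ x, 0 < ρ x)
    (hinv : ∀ x, ∑ y, π x * r x y = ∑ y, π y * r y x) :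
    ∑ x, ∑ y, 2 * √(ρ x * r x y * (ρ y * r y x)) *
        Real.sinh (Real.log (ρ x * π y / (ρ y * π x)) / 2) *
        Real.sinh (Real.log (π x * r x y / (π y * r y x)) / 2) = 0 := by
  calc _ = ∑ x, ∑ y, (ρ x / π x - ρ y / π y) * (π x * r x y - π y * r y x) / 2 :=
        sum_congr rfl fun x _ => sum_congr rfl fun y _ =>
          two_sqrt_mul_sinh_mul_sinh (hρpos x) (hρpos y) (hπpos x) (hπpos y) (hr x y) (hr y x)
            (hsym x y)
    _ = (∑ x, ∑ y, (ρ x / π x - ρ y / π y) * (π x * r x y - π y * r y x)) / 2 := by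
        simp only [sum_div]
    _ = 0 := by
        rw [sum_sum_sub_mul_sub_eq_zero (fun x => ρ x / π x) (fun x y => π x * r x y) hinv,
          zero_div]

lemma pairF_add_right (j f g : V → V → ℝ) :
    pairF j (fun x y => f x y + g x y) = pairF j f + pairF j g := by
  simp only [pairF, mul_add, sum_add_distrib]

lemma pairF_neg_right (j f : V → V → ℝ) :
    pairF j (fun x y => -f x y) = -pairF j f := by
  simp only [pairF, mul_neg, sum_neg_distrib]

lemma pairF_zero_left (f : V → V → ℝ) : pairF (fun _ _ => 0) f = 0 := by
  simp [pairF]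

lemma PsiStar_add (a f g : V → V → ℝ) :
    PsiStar a (fun x y => f x y + g x y) =
      PsiStar (fun x y => a x y * Real.cosh (g x y / 2)) f + PsiStar a g +
        ∑ x, ∑ y, a x y * Real.sinh (f x y / 2) * Real.sinh (g x y / 2) := by
  simp only [PsiStar, ← sum_add_distrib]
  refine sum_congr rfl fun x _ => sum_congr rfl fun y _ => ?_
  rw [add_div, Real.cosh_add]
  ring

lemma PsiStar_nonneg {a : V → V → ℝ} (ha : ∀ x y, 0 ≤ a x y) (f : V → V → ℝ) :
    0 ≤ PsiStar a f :=
  sum_nonneg fun x _ => sum_nonneg fun y _ =>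
    mul_nonneg (ha x y) (sub_nonneg.2 (Real.one_le_cosh _))

lemma PsiL_zero_of_nonneg {a : V → V → ℝ} (ha : ∀ x y, 0 ≤ a x y) :
    PsiL a (fun _ _ => 0) = 0 := by
  have hle : ∀ g, pairF (fun _ _ => 0) g - PsiStar a g ≤ 0 := fun g => by
    rw [pairF_zero_left]
    linarith [PsiStar_nonneg ha g]
  refine le_antisymm (ciSup_le hle) (le_ciSup_of_le ⟨0, ?_⟩ (fun _ _ => 0) ?_)
  · rintro _ ⟨g, rfl⟩
    exact hle g
  · simp [pairF, PsiStar]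

end

theorem OM_functional_decomposition_general {V : Type*} [Fintype V]
    (r : V → V → ℝ) (π ρ : V → ℝ) (j : V → V → ℝ)
    (hr : ∀ x y, 0 ≤ r x y) (hsym : ∀ x y, 0 < r x y ↔ 0 < r y x)
    (hπpos : ∀ x, 0 < π x) (hρpos : ∀ x, 0 < ρ x)
    (hinv : ∀ x, ∑ y, π x * r x y = ∑ y, π y * r y x)
    (a aS FS FA : V → V → ℝ)
    (ha : ∀ x y, a x y = 2 * Real.sqrt (ρ x * r x y * (ρ y * r y x)))
    (haS : ∀ x y, aS x y = a x y * Real.cosh (FA x y / 2))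
    (hFS : ∀ x y, FS x y = Real.log (ρ x * π y / (ρ y * π x)))
    (hFA : ∀ x y, FA x y = Real.log ((π x * r x y) / (π y * r y x))) :
    PhiOM a j (fun x y => FS x y + FA x y) =
      ((1 / 2) * ∑ x, ∑ y, j x y * Real.log (ρ y * π x / (ρ x * π y)))
        + PhiOM aS (fun _ _ => (0 : ℝ)) FS
        + PhiOM a j FA := by
  have haS_eq : aS = fun x y => a x y * Real.cosh (FA x y / 2) := funext fun x => funext (haS x)
  have haS_nonneg : ∀ x y, 0 ≤ aS x y := fun x y => by
    rw [haS, ha]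
    exact mul_nonneg (by positivity) (Real.cosh_pos _).le
  have hcross : ∑ x, ∑ y, a x y * Real.sinh (FS x y / 2) * Real.sinh (FA x y / 2) = 0 := by
    simp only [ha, hFS, hFA]
    exact sum_sum_two_sqrt_mul_sinh_mul_sinh_eq_zero r π ρ hr hsym hπpos hρpos hinv
  have hD : (1 / 2) * ∑ x, ∑ y, j x y * Real.log (ρ y * π x / (ρ x * π y)) = -pairF j FS := by
    rw [← pairF_neg_right]
    refine congrArg (pairF j) (funext fun x => funext fun y => ?_)
    rw [hFS, ← Real.log_inv, inv_div]
  unfold PhiOM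
  rw [pairF_add_right, PsiStar_add, ← haS_eq, hcross, PsiL_zero_of_nonneg haS_nonneg,
    pairF_zero_left, hD]
  ring

/-- Corollary 1 (decomposition of the OM functional):
`Φ(ρ, j, F(ρ)) = D(ρ,j) + Φ_S(ρ, 0, F^S(ρ)) + Φ(ρ, j, F^A)`, where
`D(ρ,j) = (1/2)∑_{xy} j_{xy} log (ρ(y)π(x)/(ρ(x)π(y)))` and `Φ_S` uses the
symmetric mobility `a^S_{xy} = a_{xy} cosh (F^A_{xy}/2)`. -/
theorem OM_functional_decomposition {V : Type*} [Fintype V]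
    (r : V → V → ℝ) (π ρ : V → ℝ) (j : V → V → ℝ)
    (hr : ∀ x y, 0 ≤ r x y) (hsym : ∀ x y, 0 < r x y ↔ 0 < r y x)
    (hπpos : ∀ x, 0 < π x) (hρpos : ∀ x, 0 < ρ x)
    (hinv : ∀ x, ∑ y, π x * r x y = ∑ y, π y * r y x)
    (hjanti : ∀ x y, j x y = - j y x)
    (a aS FS FA : V → V → ℝ)
    (ha : ∀ x y, a x y = 2 * Real.sqrt (ρ x * r x y * (ρ y * r y x)))
    (haS : ∀ x y, aS x y = a x y * Real.cosh (FA x y / 2))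
    (hFS : ∀ x y, FS x y = Real.log (ρ x * π y / (ρ y * π x)))
    (hFA : ∀ x y, FA x y = Real.log ((π x * r x y) / (π y * r y x))) :
    PhiOM a j (fun x y => FS x y + FA x y) =
      ((1 / 2) * ∑ x, ∑ y, j x y * Real.log (ρ y * π x / (ρ x * π y)))
        + PhiOM aS (fun _ _ => (0 : ℝ)) FS
        + PhiOM a j FA :=
  OM_functional_decomposition_general r π ρ j hr hsym hπpos hρpos hinv a aS FS FA ha haS hFS hFA
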